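/- For every regular point x ∈ ℝ^{n_0}, the critical indices are stable: C(x) = C̃_s(x) for all compatible activation patterns s ∈ S^C(x). -/

import Mathlib

/-!
Formalization of the setting of "Deep ReLU Programming" (Hinz & van de Geer).

A feed-forward ReLU network with `L` hidden layers and widths `n 0, …, n (L+1)`
(`n (L+1) = 1` for a real-valued network) is encoded by the structure `Net L n`
below, where `W k : Matrix (Fin (n (k+1))) (Fin (n k)) ℝ` and
`b k : Fin (n (k+1)) → ℝ` are the weight matrix and bias vector of layer `k+1`
(so the paper's `W_l, b_l` correspond to `W (l-1), b (l-1)` here).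

A neuron `(l, j)` of the paper (layer `l ∈ {1, …, L}`, neuron `j`) is encoded as
the pair `⟨k, j⟩ : Idx n` with `k = l - 1`; membership in the index set `I`
corresponds to the condition `k < L`.
-/

noncomputable section
open Metric Filter Topology
open scoped Classical RealInnerProductSpace BigOperators

namespace DRLP

/-- Input space `ℝ^{n 0}` with the Euclidean metric and inner product. -/
abbrev Input (n : ℕ → ℕ) := EuclideanSpace ℝ (Fin (n 0))

/-- Patterns: one real number for each neuron `⟨k, j⟩` (neuron `j` of layer `k+1`). -/
abbrev Pat (n : ℕ → ℕ) := ∀ k : ℕ, Fin (n (k+1)) → ℝ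

/-- Neuron indices: `⟨k, j⟩` denotes neuron `j` of layer `k+1`. -/
abbrev Idx (n : ℕ → ℕ) := Σ k : ℕ, Fin (n (k+1))

/-- `s` is an activation pattern (element of `S = {0,1}^{n_1} × ⋯ × {0,1}^{n_L}`). -/
def IsPattern (L : ℕ) {n : ℕ → ℕ} (s : Pat n) : Prop :=
  ∀ k < L, ∀ j, s k j = 0 ∨ s k j = 1

/-- Compatibility of a (hyperplane) pattern `h` with an activation pattern `s`:
`h_{lj} (s_{lj} - 0.5) ≥ 0` for all neurons `(l,j) ∈ I`. -/
def PatCompatible (L : ℕ) {n : ℕ → ℕ} (h s : Pat n) : Prop :=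
  ∀ k < L, ∀ j, h k j * (s k j - 1/2) ≥ 0

/-- A feed-forward ReLU network with `L` hidden layers and widths `n 0, …, n (L+1)`. -/
structure Net (L : ℕ) (n : ℕ → ℕ) : Type where
  W : ∀ k : ℕ, Matrix (Fin (n (k+1))) (Fin (n k)) ℝ
  b : ∀ k : ℕ, Fin (n (k+1)) → ℝ

namespace Net

variable {L : ℕ} {n : ℕ → ℕ} (N : Net L n)

/-- Output of layer `k` (entrywise ReLU applied); layer `0` is the input itself. -/
def hid (x : Input n) : (k : ℕ) → Fin (n k) → ℝ
  | 0 => fun i => x i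
  | k + 1 => fun j => max ((N.W k).mulVec (hid x k) j + N.b k j) 0

/-- The ReLU arguments `A(x)`: pre-activation of neuron `j` in layer `k+1`. -/
def preact (x : Input n) (k : ℕ) (j : Fin (n (k+1))) : ℝ :=
  (N.W k).mulVec (N.hid x k) j + N.b k j

/-- The hyperplane pattern `H(x) = sign.(A(x))`. -/
def Hpat (x : Input n) (k : ℕ) (j : Fin (n (k+1))) : ℝ :=
  Real.sign (N.preact x k j)

/-- Subjective hidden layers: activations frozen to the pattern `s`. -/
def shid (s : Pat n) (x : Input n) : (k : ℕ) → Fin (n k) → ℝ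
  | 0 => fun i => x i
  | k + 1 => fun j => s k j * ((N.W k).mulVec (shid s x k) j + N.b k j)

/-- The subjective ReLU arguments `Ã_s(x)`. -/
def spreact (s : Pat n) (x : Input n) (k : ℕ) (j : Fin (n (k+1))) : ℝ :=
  (N.W k).mulVec (N.shid s x k) j + N.b k j

/-- The subjective hyperplane pattern `H̃_s(x) = sign.(Ã_s(x))`. -/
def sHpat (s : Pat n) (x : Input n) (k : ℕ) (j : Fin (n (k+1))) : ℝ :=
  Real.sign (N.spreact s x k j)

/-- `S^C(x)`: activation patterns compatible with the hyperplane pattern `H(x)`. -/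
def SC (x : Input n) : Set (Pat n) :=
  {s | IsPattern L s ∧ PatCompatible L (N.Hpat x) s}

/-- `S̃^C(x)`: activation patterns compatible with their own induced subjective
hyperplane pattern `H̃_s(x)`. -/
def SCtilde (x : Input n) : Set (Pat n) :=
  {s | IsPattern L s ∧ PatCompatible L (N.sHpat s x) s}

/-- `C(x)`: critical indices, i.e. neurons whose hyperplane pattern is non-constant in
every neighbourhood of `x`. -/
def Critical (x : Input n) (p : Idx n) : Prop :=
  p.1 < L ∧ ∀ ε > 0, ∃ y z : Input n, dist y x < ε ∧ dist z x < ε ∧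
    N.Hpat y p.1 p.2 ≠ N.Hpat z p.1 p.2

/-- `C̃_s(x)`: subjective critical indices. -/
def sCritical (s : Pat n) (x : Input n) (p : Idx n) : Prop :=
  p.1 < L ∧ ∀ ε > 0, ∃ y z : Input n, dist y x < ε ∧ dist z x < ε ∧
    N.sHpat s y p.1 p.2 ≠ N.sHpat s z p.1 p.2

/-- The critical kernel `Ker^C(x)`. -/
def KerC (x : Input n) : Set (Input n) :=
  {v | ∃ ε > 0, ∀ t : ℝ, |t| < ε → ∀ p : Idx n, p.1 < L →
    N.Hpat (x + t • v) p.1 p.2 = N.Hpat x p.1 p.2}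

/-- The subjective critical kernel `K̃er^C_s(x)`. -/
def sKerC (s : Pat n) (x : Input n) : Set (Input n) :=
  {v | ∃ ε > 0, ∀ t : ℝ, |t| < ε → ∀ p : Idx n, p.1 < L →
    N.sHpat s (x + t • v) p.1 p.2 = N.sHpat s x p.1 p.2}

/-- Critical degrees of freedom `df^C(x) = dim Ker^C(x)`. -/
def dfC (x : Input n) : ℕ :=
  Module.finrank ℝ (Submodule.span ℝ (N.KerC x))

/-- `x` is a vertex iff `df^C(x) = 0`. -/
def IsVertex (x : Input n) : Prop := N.dfC x = 0

/-- The matrix `W_{k+1} diag(s_k) W_k ⋯ diag(s_1) W_1`. -/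
def sMat (s : Pat n) : (k : ℕ) → Matrix (Fin (n (k+1))) (Fin (n 0)) ℝ
  | 0 => N.W 0
  | k + 1 => N.W (k+1) * Matrix.diagonal (s k) * sMat s k

/-- The normal vector `ṽ_{s,l,j}` (transpose of the `j`-th row of
`W_l diag(s_{l-1}) ⋯ diag(s_1) W_1`). -/
def nvec (s : Pat n) (p : Idx n) : Input n :=
  WithLp.toLp 2 (fun i => N.sMat s p.1 p.2 i)

/-- The oriented normal vector `ũ_{s,l,j}`. -/
def onvec (s : Pat n) (p : Idx n) : Input n :=
  if s p.1 p.2 = 1 then N.nvec s p else -N.nvec s p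

/-- The gradient `∇_s = (W_{L+1} diag(s_L) ⋯ diag(s_1) W_1)ᵀ ∈ ℝ^{n_0}`. -/
def grad (h1 : n (L+1) = 1) (s : Pat n) : Input n :=
  N.nvec s ⟨L, Fin.cast h1.symm 0⟩

/-- The (real-valued) network function `f`. -/
def fnet (h1 : n (L+1) = 1) (x : Input n) : ℝ :=
  N.preact x L (Fin.cast h1.symm 0)

/-- The subjective network function `f̃_s`. -/
def sfnet (h1 : n (L+1) = 1) (s : Pat n) (x : Input n) : ℝ :=
  N.spreact s x L (Fin.cast h1.symm 0)

/-- The feasible directions `D̃_s(x)`. -/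
def Dfeas (s : Pat n) (x : Input n) : Set (Input n) :=
  {v | ∃ ε > 0, s ∈ N.SC (x + ε • v)}

/-- `x` is a regular point: for every compatible activation pattern `s ∈ S^C(x)`, the
normal vectors at the subjective critical indices are linearly independent. -/
def RegularPoint (x : Input n) : Prop :=
  ∀ s ∈ N.SC x, LinearIndependent ℝ
    (fun p : {p : Idx n // N.sCritical s x p} => N.nvec s p.1)

/-- The network is regular if every point is a regular point. -/
def Regular : Prop := ∀ x : Input n, N.RegularPoint x

/-- `w` is the feasible axis `ã_{x,s,l,j}` at `x` for the activation pattern `s` and the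
critical index `p = (l,j)`: it pairs to `1` with the oriented normal vector of `p` and
to `0` with the oriented normal vectors of all other critical indices of `x`. -/
def IsAxis (x : Input n) (s : Pat n) (p : Idx n) (w : Input n) : Prop :=
  ∀ q : Idx n, N.Critical x q → ⟪w, N.onvec s q⟫ = if p = q then 1 else 0

/-- The region separating axes `𝒜(x)`. -/
def RegionSepAxes (x : Input n) : Set (Input n) :=
  {w | ∃ s ∈ N.SC x, ∃ p : Idx n, N.Critical x p ∧ N.IsAxis x s p w}

end Net

end DRLP

/-!
The subjective pre-activation `Ã_s` is affine, with gradients the normal vectors `ṽ_{s,p}`, and it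
agrees with the true pre-activation `A` wherever `s` is a compatible pattern. Hence `p ∈ C̃_s(x)`
iff `Ã_s(x)_p = 0` and `ṽ_{s,p} ≠ 0`.

If `p ∈ C̃_s(x)`, regularity gives a direction `w` orthogonal to the normals of the other
subjective critical indices and crossing the hyperplane of `p` towards the side selected by `s_p`.
For small `t > 0` the pattern `s` is still compatible at `x + t w`, where `A_p ≠ 0 = A(x)_p`.

If `p ∈ C(x)` but `ṽ_{s,p} = 0`, then `ṽ_{s',p} = 0` for every `s' ∈ S^C(x)`: two such patterns
differ only at neurons `q` with `A(x)_q = 0`, and changing the activation of one of them changes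
`ṽ_p` by a multiple of `ṽ_q`, so a nonzero `ṽ_p` would contradict regularity. Since every point
near `x` has a compatible pattern in `S^C(x)`, `A_p` then vanishes near `x`, contradicting
`p ∈ C(x)`.
-/

theorem ContinuousAt.eventually_sign_eq {X : Type*} [TopologicalSpace X] {f : X → ℝ} {x : X}
    (hf : ContinuousAt f x) (hx : f x ≠ 0) : ∀ᶠ y in 𝓝 x, Real.sign (f y) = Real.sign (f x) := by
  rcases hx.lt_or_gt with hneg | hpos
  · filter_upwards [hf.eventually_lt continuousAt_const hneg] with y hy
    rw [Real.sign_of_neg hy, Real.sign_of_neg hneg]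
  · filter_upwards [continuousAt_const.eventually_lt hf hpos] with y hy
    rw [Real.sign_of_pos hy, Real.sign_of_pos hpos]

theorem forall_exists_dist_ne_iff_frequently {X β : Type*} [PseudoMetricSpace X] (g : X → β)
    (x : X) : (∀ ε > 0, ∃ y z, dist y x < ε ∧ dist z x < ε ∧ g y ≠ g z) ↔
      ∃ᶠ y in 𝓝 x, g y ≠ g x := by
  rw [Metric.nhds_basis_ball.frequently_iff]
  refine forall₂_congr fun ε hε => ⟨fun ⟨y, z, hy, hz, hne⟩ => ?_, fun ⟨y, hy, hne⟩ =>
    ⟨y, x, hy, mem_ball_self hε, hne⟩⟩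
  by_cases hyx : g y = g x
  · exact ⟨z, hz, fun hzx => hne (hyx.trans hzx.symm)⟩
  · exact ⟨y, hy, hyx⟩

section InnerProductSpace

variable {E : Type*} [NormedAddCommGroup E] [InnerProductSpace ℝ E]

theorem tendsto_add_smul_nhdsGT_zero (x w : E) :
    Tendsto (fun t : ℝ => x + t • w) (𝓝[>] 0) (𝓝 x) := by
  have h : Continuous fun t : ℝ => x + t • w := by fun_prop
  simpa using (h.tendsto 0).mono_left nhdsWithin_le_nhds

theorem frequently_sign_add_inner_ne_iff (a : ℝ) (v x : E) :
    (∃ᶠ y in 𝓝 x, Real.sign (a + ⟪v, y - x⟫) ≠ Real.sign a) ↔ a = 0 ∧ v ≠ 0 := by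
  constructor
  · intro h
    by_contra! hav
    refine Filter.not_frequently.2 ?_ h
    by_cases ha : a = 0
    · exact Filter.Eventually.of_forall fun y => by simp [hav ha]
    · have hf : ContinuousAt (fun y => a + ⟪v, y - x⟫) x := by fun_prop
      simpa using hf.eventually_sign_eq (by simpa using ha)
  · rintro ⟨rfl, hv⟩
    refine (tendsto_add_smul_nhdsGT_zero x v).frequently
      (Filter.Eventually.frequently ?_)
    filter_upwards [self_mem_nhdsWithin] with t ht
    have hpos : 0 < t * ‖v‖ ^ 2 := mul_pos ht (by positivity)
    rw [add_sub_cancel_left, inner_smul_right, real_inner_self_eq_norm_sq, zero_add,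
      Real.sign_zero, Real.sign_of_pos hpos]
    exact one_ne_zero

theorem LinearIndependent.exists_inner_eq_and_inner_eq_zero [FiniteDimensional ℝ E]
    {ι : Type*} {f : ι → E} (hf : LinearIndependent ℝ f) (i : ι) (c : ℝ) :
    ∃ w, ⟪f i, w⟫ = c ∧ ∀ j ≠ i, ⟪f j, w⟫ = 0 := by
  set K := Submodule.span ℝ (f '' {j | j ≠ i})
  obtain ⟨a, ha, u, hu, hfi⟩ := K.exists_add_mem_mem_orthogonal (f i)
  have hu0 : u ≠ 0 := by
    rintro rfl
    exact hf.notMem_span_image (s := {j | j ≠ i}) (x := i) (by simp) (by rwa [hfi, add_zero])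
  have hperp : ∀ j ≠ i, ⟪f j, u⟫ = 0 := fun j hj =>
    (K.mem_orthogonal u).1 hu _ (Submodule.subset_span ⟨j, hj, rfl⟩)
  refine ⟨(c / ‖u‖ ^ 2) • u, ?_, fun j hj => by rw [inner_smul_right, hperp j hj, mul_zero]⟩
  rw [inner_smul_right, hfi, inner_add_left, (K.mem_orthogonal u).1 hu a ha, zero_add,
    real_inner_self_eq_norm_sq]
  field_simp [norm_ne_zero_iff.2 hu0]

end InnerProductSpace

theorem mul_eq_max_zero_of_sign_mul_nonneg {s a : ℝ} (hs : s = 0 ∨ s = 1)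
    (h : Real.sign a * (s - 1 / 2) ≥ 0) : s * a = max a 0 := by
  rcases lt_trichotomy a 0 with ha | rfl | ha
  · rw [Real.sign_of_neg ha] at h
    rcases hs with rfl | rfl <;> [simp [ha.le]; linarith]
  · simp
  · rw [Real.sign_of_pos ha] at h
    rcases hs with rfl | rfl <;> [linarith; simp [ha.le]]

theorem eq_ite_of_sign_mul_nonneg {s a : ℝ} (hs : s = 0 ∨ s = 1) (ha : a ≠ 0)
    (h : Real.sign a * (s - 1 / 2) ≥ 0) : s = if 0 < a then 1 else 0 := by
  rcases ha.lt_or_gt with ha | ha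
  · rw [Real.sign_of_neg ha] at h
    rw [if_neg ha.not_gt]
    rcases hs with rfl | rfl <;> [rfl; linarith]
  · rw [Real.sign_of_pos ha] at h
    rw [if_pos ha]
    rcases hs with rfl | rfl <;> [linarith; rfl]

theorem sign_mul_mul_nonneg_of_pos {t a c : ℝ} (ht : 0 < t) (h : a * c ≥ 0) :
    Real.sign (t * a) * c ≥ 0 := by
  rcases lt_trichotomy a 0 with ha | rfl | ha
  · rw [Real.sign_of_neg (mul_neg_of_pos_of_neg ht ha)]
    nlinarith
  · simp
  · rw [Real.sign_of_pos (mul_pos ht ha)]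
    nlinarith

namespace DRLP

theorem eventually_sign_eq_of_ne_zero {X : Type*} [TopologicalSpace X] {n : ℕ → ℕ} (L : ℕ)
    {g : X → Pat n} {x : X} (hg : ∀ k j, ContinuousAt (fun y => g y k j) x) :
    ∀ᶠ y in 𝓝 x, ∀ k < L, ∀ j, g x k j ≠ 0 → Real.sign (g y k j) = Real.sign (g x k j) := by
  refine (Filter.eventually_all_finite (Set.finite_lt_nat L)).2 fun k _ =>
    Filter.eventually_all.2 fun j => ?_
  by_cases h : g x k j = 0
  · simp [h]
  · filter_upwards [(hg k j).eventually_sign_eq h] with y hy using fun _ => hy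

namespace Net

variable {L : ℕ} {n : ℕ → ℕ} (N : Net L n)

theorem nvec_succ (s : Pat n) (k : ℕ) (j : Fin (n (k+2))) :
    N.nvec s ⟨k + 1, j⟩ = ∑ r, (N.W (k+1) j r * s k r) • N.nvec s ⟨k, r⟩ := by
  ext i
  simp only [nvec, sMat, WithLp.ofLp_sum, WithLp.ofLp_smul, Finset.sum_apply, Pi.smul_apply,
    smul_eq_mul]
  rw [Matrix.mul_apply]
  simp only [Matrix.mul_diagonal]

theorem spreact_add (s : Pat n) (x v : Input n) :
    ∀ k (j : Fin (n (k+1))), N.spreact s (x + v) k j = N.spreact s x k j + ⟪N.nvec s ⟨k, j⟩, v⟫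
  | 0, j => by
    simp [spreact, shid, nvec, sMat, Matrix.mulVec, dotProduct, PiLp.inner_apply, mul_add,
      Finset.sum_add_distrib, add_right_comm, mul_comm]
  | k + 1, j => by
    have hstep : ∀ y, N.spreact s y (k+1) j =
        ∑ r, N.W (k+1) j r * (s k r * N.spreact s y k r) + N.b (k+1) j := fun y => rfl
    rw [hstep, hstep, nvec_succ, sum_inner]
    simp only [spreact_add s x v k, inner_smul_left, conj_trivial, mul_add,
      Finset.sum_add_distrib, mul_assoc, add_right_comm]

theorem spreact_eq_add_inner (s : Pat n) (x y : Input n) (k : ℕ) (j : Fin (n (k+1))) :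
    N.spreact s y k j = N.spreact s x k j + ⟪N.nvec s ⟨k, j⟩, y - x⟫ := by
  rw [← N.spreact_add, add_sub_cancel]

theorem continuous_spreact (s : Pat n) (k : ℕ) (j : Fin (n (k+1))) :
    Continuous fun y : Input n => N.spreact s y k j := by
  have h : (fun y => N.spreact s y k j) = fun y => N.spreact s 0 k j + ⟪N.nvec s ⟨k, j⟩, y - 0⟫ :=
    funext fun y => N.spreact_eq_add_inner s 0 y k j
  rw [h]
  fun_prop

theorem continuous_hid : ∀ k (i : Fin (n k)), Continuous fun x : Input n => N.hid x k i
  | 0, i => (EuclideanSpace.proj i).continuous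
  | k + 1, j => by
    have := continuous_hid k
    simp only [hid, Matrix.mulVec, dotProduct]
    fun_prop

theorem continuous_preact (k : ℕ) (j : Fin (n (k+1))) :
    Continuous fun x : Input n => N.preact x k j := by
  have := N.continuous_hid k
  simp only [preact, Matrix.mulVec, dotProduct]
  fun_prop

theorem shid_eq_hid (s : Pat n) (y : Input n) : ∀ k, (∀ m < k, ∀ i, s m i = 0 ∨ s m i = 1) →
    (∀ m < k, ∀ i, Real.sign (N.preact y m i) * (s m i - 1 / 2) ≥ 0) →
    N.shid s y k = N.hid y k
  | 0, _, _ => rfl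
  | k + 1, hpat, hcomp => by
    have ih := shid_eq_hid s y k (fun m hm => hpat m (hm.trans k.lt_succ_self))
      (fun m hm => hcomp m (hm.trans k.lt_succ_self))
    funext j
    show s k j * ((N.W k).mulVec (N.shid s y k) j + N.b k j) = max (N.preact y k j) 0
    rw [ih]
    exact mul_eq_max_zero_of_sign_mul_nonneg (hpat k k.lt_succ_self j) (hcomp k k.lt_succ_self j)

theorem spreact_eq_preact_of_mem_SC {s : Pat n} {y : Input n} (hs : s ∈ N.SC y) {k : ℕ}
    (hk : k ≤ L) (j : Fin (n (k+1))) : N.spreact s y k j = N.preact y k j := by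
  simp only [spreact, preact, N.shid_eq_hid s y k (fun m hm => hs.1 m (hm.trans_le hk))
    (fun m hm => hs.2 m (hm.trans_le hk))]

theorem SCtilde_eq_SC (y : Input n) : N.SCtilde y = N.SC y := by
  ext s
  refine ⟨fun hs => ⟨hs.1, fun k hk => ?_⟩, fun hs => ⟨hs.1, fun k hk j => ?_⟩⟩
  · induction k using Nat.strong_induction_on with
    | _ k ih =>
      intro j
      have hlow := N.shid_eq_hid s y k (fun m hm => hs.1 m (hm.trans hk))
        (fun m hm => ih m hm (hm.trans hk))
      have h := hs.2 k hk j
      simp only [sHpat, spreact, hlow] at h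
      exact h
  · rw [sHpat, N.spreact_eq_preact_of_mem_SC hs hk.le]
    exact hs.2 k hk j

def actPat (x : Input n) : Pat n := fun k j => if 0 < N.preact x k j then 1 else 0

theorem actPat_mem_SC (x : Input n) : N.actPat x ∈ N.SC x := by
  refine ⟨fun k _ j => ?_, fun k _ j => ?_⟩
  · unfold actPat
    split_ifs <;> simp
  · show Real.sign (N.preact x k j) * (N.actPat x k j - 1 / 2) ≥ 0
    unfold actPat
    split_ifs with h
    · rw [Real.sign_of_pos h]
      norm_num
    · rcases (not_lt.1 h).lt_or_eq with h | h
      · rw [Real.sign_of_neg h]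
        norm_num
      · rw [h, Real.sign_zero, zero_mul]

theorem eventually_SC_subset (x : Input n) : ∀ᶠ y in 𝓝 x, N.SC y ⊆ N.SC x := by
  filter_upwards [eventually_sign_eq_of_ne_zero L (g := fun y => N.preact y)
    fun k j => (N.continuous_preact k j).continuousAt] with y hy s hs
  refine ⟨hs.1, fun k hk j => ?_⟩
  by_cases h0 : N.preact x k j = 0
  · simp [Hpat, h0]
  · rw [Hpat, ← hy k hk j h0]
    exact hs.2 k hk j

theorem critical_iff {x : Input n} {p : Idx n} :
    N.Critical x p ↔ p.1 < L ∧ ∃ᶠ y in 𝓝 x, N.Hpat y p.1 p.2 ≠ N.Hpat x p.1 p.2 := by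
  rw [Critical, forall_exists_dist_ne_iff_frequently (fun y => N.Hpat y p.1 p.2)]

theorem preact_eq_zero_of_critical {x : Input n} {p : Idx n} (h : N.Critical x p) :
    N.preact x p.1 p.2 = 0 := by
  by_contra h0
  refine (N.critical_iff.1 h).2 ?_
  filter_upwards [(N.continuous_preact _ _).continuousAt.eventually_sign_eq h0] with y hy
  exact not_not_intro hy

theorem sCritical_iff {s : Pat n} {x : Input n} {p : Idx n} :
    N.sCritical s x p ↔ p.1 < L ∧ N.spreact s x p.1 p.2 = 0 ∧ N.nvec s p ≠ 0 := by
  obtain ⟨k, j⟩ := p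
  have h : ∀ y, N.sHpat s y k j = Real.sign (N.spreact s x k j + ⟪N.nvec s ⟨k, j⟩, y - x⟫) :=
    fun y => by rw [sHpat, N.spreact_eq_add_inner s x y]
  rw [sCritical, forall_exists_dist_ne_iff_frequently (fun y => N.sHpat s y k j)]
  simp only [h, sub_self, inner_zero_right, add_zero, frequently_sign_add_inner_ne_iff]

theorem sMat_congr {s s' : Pat n} : ∀ k, (∀ m < k, s m = s' m) → N.sMat s k = N.sMat s' k
  | 0, _ => rfl
  | k + 1, h => by
    rw [sMat, sMat, h k k.lt_succ_self,
      sMat_congr k fun m hm => h m (hm.trans k.lt_succ_self)]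

theorem nvec_congr {s s' : Pat n} {p : Idx n} (h : ∀ m < p.1, s m = s' m) :
    N.nvec s p = N.nvec s' p := by
  rw [nvec, nvec, N.sMat_congr p.1 h]

theorem nvec_sub_mem_span {t t' : Pat n} (q : Idx n) (h : ∀ r ≠ q, t' r.1 r.2 = t r.1 r.2) :
    ∀ k (j : Fin (n (k+1))), N.nvec t' ⟨k, j⟩ - N.nvec t ⟨k, j⟩ ∈ Submodule.span ℝ {N.nvec t q}
  | 0, j => by simp [nvec, sMat]
  | k + 1, j => by
    rw [nvec_succ, nvec_succ, ← Finset.sum_sub_distrib]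
    refine Submodule.sum_mem _ fun r _ => ?_
    rw [show ∀ (a b : ℝ) (u v : Input n), a • u - b • v = a • (u - v) + (a - b) • v by
      intros; module]
    refine add_mem (Submodule.smul_mem _ _ (nvec_sub_mem_span q h k r)) ?_
    by_cases hr : (⟨k, r⟩ : Idx n) = q
    · subst hr
      exact Submodule.smul_mem _ _ (Submodule.mem_span_singleton_self _)
    · rw [h _ hr, sub_self, zero_smul]
      exact zero_mem _

theorem nvec_eq_zero_of_forall_ne_eq {x : Input n} (hreg : N.RegularPoint x) {t t' : Pat n}
    (ht' : t' ∈ N.SC x) {p q : Idx n} (hqp : q.1 < p.1) (hpL : p.1 < L)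
    (hp0 : N.preact x p.1 p.2 = 0) (hq0 : N.preact x q.1 q.2 = 0)
    (h : ∀ r ≠ q, t' r.1 r.2 = t r.1 r.2) (hz : N.nvec t p = 0) : N.nvec t' p = 0 := by
  obtain ⟨α, hα⟩ := Submodule.mem_span_singleton.1 (N.nvec_sub_mem_span q h p.1 p.2)
  have hq : N.nvec t q = N.nvec t' q := N.nvec_congr fun m hm => funext fun i =>
    (h ⟨m, i⟩ fun hmi => hm.ne (congrArg Sigma.fst hmi)).symm
  rw [hz, sub_zero, hq] at hα
  by_contra hne
  have hcrit : ∀ r : Idx n, r.1 < L → N.preact x r.1 r.2 = 0 → N.nvec t' r ≠ 0 →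
      N.sCritical t' x r := fun r hr h0 hv =>
    N.sCritical_iff.2 ⟨hr, (N.spreact_eq_preact_of_mem_SC ht' hr.le _).trans h0, hv⟩
  have hP := hcrit p hpL hp0 hne
  have hQ := hcrit q (hqp.trans hpL) hq0 fun h0 => hne (by rw [← hα, h0, smul_zero])
  refine (hreg t' ht').notMem_span_image (s := {⟨q, hQ⟩}) (x := ⟨p, hP⟩) ?_ ?_
  · simp only [Set.mem_singleton_iff, Subtype.mk.injEq]
    exact fun hpq => hqp.ne' (congrArg Sigma.fst hpq)
  · rw [Set.image_singleton]
    exact Submodule.mem_span_singleton.2 ⟨α, hα⟩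

def mixPat (s s' : Pat n) (D : Finset (Idx n)) : Pat n :=
  fun k j => if (⟨k, j⟩ : Idx n) ∈ D then s' k j else s k j

theorem mixPat_mem_SC {x : Input n} {s s' : Pat n} (hs : s ∈ N.SC x) (hs' : s' ∈ N.SC x)
    (D : Finset (Idx n)) : mixPat s s' D ∈ N.SC x := by
  refine ⟨fun k hk j => ?_, fun k hk j => ?_⟩ <;> unfold mixPat <;> split_ifs
  exacts [hs'.1 k hk j, hs.1 k hk j, hs'.2 k hk j, hs.2 k hk j]

theorem eq_of_mem_SC_of_preact_ne_zero {x : Input n} {s s' : Pat n} (hs : s ∈ N.SC x)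
    (hs' : s' ∈ N.SC x) {k : ℕ} (hk : k < L) {j : Fin (n (k+1))} (h0 : N.preact x k j ≠ 0) :
    s k j = s' k j :=
  (eq_ite_of_sign_mul_nonneg (hs.1 k hk j) h0 (hs.2 k hk j)).trans
    (eq_ite_of_sign_mul_nonneg (hs'.1 k hk j) h0 (hs'.2 k hk j)).symm

theorem nvec_eq_zero_of_mem_SC {x : Input n} (hreg : N.RegularPoint x) {s s' : Pat n}
    (hs : s ∈ N.SC x) (hs' : s' ∈ N.SC x) {k : ℕ} (hk : k < L) {j : Fin (n (k+1))}
    (h0 : N.preact x k j = 0) (hz : N.nvec s ⟨k, j⟩ = 0) : N.nvec s' ⟨k, j⟩ = 0 := by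
  -- Turn `s` into `s'` one neuron below layer `k` at a time: off its hyperplane a neuron has
  -- the same activation in both patterns, on it `nvec_eq_zero_of_forall_ne_eq` applies.
  have key : ∀ D : Finset (Idx n), (∀ q ∈ D, q.1 < k) → N.nvec (mixPat s s' D) ⟨k, j⟩ = 0 := by
    intro D
    induction D using Finset.induction_on with
    | empty =>
      intro _
      rwa [show mixPat s s' ∅ = s from funext fun m => funext fun i => by simp [mixPat]]
    | insert q D hqD ih =>
      intro hD
      have hqk := hD q (Finset.mem_insert_self q D)
      replace ih := ih fun r hr => hD r (Finset.mem_insert_of_mem hr)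
      by_cases hq0 : N.preact x q.1 q.2 = 0
      · refine N.nvec_eq_zero_of_forall_ne_eq hreg (N.mixPat_mem_SC hs hs' _) hqk hk h0 hq0
          (fun r hr => ?_) ih
        simp [mixPat, hr]
      · have hmix : mixPat s s' (insert q D) = mixPat s s' D := by
          funext m i
          by_cases hmi : (⟨m, i⟩ : Idx n) = q
          · subst hmi
            simp [mixPat, hqD, N.eq_of_mem_SC_of_preact_ne_zero hs hs' (hqk.trans hk) hq0]
          · simp [mixPat, hmi]
        rwa [hmix]
  have hall := key ((Finset.range k).sigma fun _ => Finset.univ) (by simp)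
  rwa [N.nvec_congr (s' := s') fun m hm => funext fun i => by simp [mixPat, hm]] at hall

theorem sCritical_of_critical {x : Input n} (hreg : N.RegularPoint x) {s : Pat n}
    (hs : s ∈ N.SC x) {p : Idx n} (hp : N.Critical x p) : N.sCritical s x p := by
  obtain ⟨k, j⟩ := p
  obtain ⟨hk, hfreq⟩ := N.critical_iff.1 hp
  have h0 : N.preact x k j = 0 := N.preact_eq_zero_of_critical hp
  refine N.sCritical_iff.2 ⟨hk, (N.spreact_eq_preact_of_mem_SC hs hk.le j).trans h0, fun hz => ?_⟩
  refine hfreq ?_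
  filter_upwards [N.eventually_SC_subset x] with y hy
  have hy' := N.actPat_mem_SC y
  rw [not_not, Hpat, Hpat, ← N.spreact_eq_preact_of_mem_SC hy' hk.le,
    N.spreact_eq_add_inner _ x, N.nvec_eq_zero_of_mem_SC hreg hs (hy hy') hk h0 hz,
    inner_zero_left, add_zero, N.spreact_eq_preact_of_mem_SC (hy hy') hk.le]

theorem eventually_mem_SC_add_smul {x : Input n} {s : Pat n} (hs : s ∈ N.SC x) {w : Input n}
    (hw : ∀ m < L, ∀ i, N.spreact s x m i = 0 → ⟪N.nvec s ⟨m, i⟩, w⟫ * (s m i - 1 / 2) ≥ 0) :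
    ∀ᶠ t : ℝ in 𝓝[>] 0, s ∈ N.SC (x + t • w) := by
  have hsx : s ∈ N.SCtilde x := (N.SCtilde_eq_SC x).symm ▸ hs
  have hstable := (tendsto_add_smul_nhdsGT_zero x w).eventually
    (eventually_sign_eq_of_ne_zero L (g := fun y => N.spreact s y)
      fun k j => (N.continuous_spreact s k j).continuousAt)
  filter_upwards [hstable, self_mem_nhdsWithin] with t hsign (ht : 0 < t)
  rw [← SCtilde_eq_SC]
  refine ⟨hs.1, fun m hm i => ?_⟩
  show Real.sign (N.spreact s (x + t • w) m i) * (s m i - 1 / 2) ≥ 0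
  by_cases h0 : N.spreact s x m i = 0
  · rw [N.spreact_add, h0, zero_add, inner_smul_right]
    exact sign_mul_mul_nonneg_of_pos ht (hw m hm i h0)
  · rw [hsign m hm i h0]
    exact hsx.2 m hm i

theorem critical_of_sCritical {x : Input n} (hreg : N.RegularPoint x) {s : Pat n}
    (hs : s ∈ N.SC x) {p : Idx n} (hp : N.sCritical s x p) : N.Critical x p := by
  obtain ⟨k, j⟩ := p
  obtain ⟨hk, h0, -⟩ := N.sCritical_iff.1 hp
  set c := s k j - 1 / 2
  have hc : c ≠ 0 := by rcases hs.1 k hk j with h | h <;> simp only [c, h] <;> norm_num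
  obtain ⟨w, hwp, hwq⟩ := (hreg s hs).exists_inner_eq_and_inner_eq_zero ⟨⟨k, j⟩, hp⟩ c
  have hw : ∀ m < L, ∀ i, N.spreact s x m i = 0 → ⟪N.nvec s ⟨m, i⟩, w⟫ * (s m i - 1 / 2) ≥ 0 := by
    intro m hm i hmi0
    by_cases hv : N.nvec s ⟨m, i⟩ = 0
    · rw [hv, inner_zero_left, zero_mul]
    by_cases hq : (⟨⟨m, i⟩, N.sCritical_iff.2 ⟨hm, hmi0, hv⟩⟩ : {p // N.sCritical s x p}) =
        ⟨⟨k, j⟩, hp⟩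
    · simp only [Subtype.mk.injEq, Sigma.mk.inj_iff] at hq
      obtain ⟨rfl, hij⟩ := hq
      cases hij
      rw [hwp]
      exact mul_self_nonneg c
    · rw [hwq _ hq, zero_mul]
  refine N.critical_iff.2 ⟨hk, (tendsto_add_smul_nhdsGT_zero x w).frequently
    (Filter.Eventually.frequently ?_)⟩
  filter_upwards [N.eventually_mem_SC_add_smul hs hw, self_mem_nhdsWithin] with t hsy (ht : 0 < t)
  rw [Hpat, Hpat, ← N.spreact_eq_preact_of_mem_SC hsy hk.le,
    ← N.spreact_eq_preact_of_mem_SC hs hk.le, N.spreact_add, h0, zero_add, inner_smul_right, hwp,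
    Real.sign_zero]
  exact mt Real.sign_eq_zero_iff.1 (mul_ne_zero ht.ne' hc)

end Net

/-- Theorem 2: for every regular point `x`, the critical indices are
stable: `C(x) = C̃_s(x)` for all compatible `s ∈ S^C(x)`. -/
theorem statement11 {L : ℕ} {n : ℕ → ℕ} (N : Net L n) (x : Input n)
    (hreg : N.RegularPoint x) (s : Pat n) (hs : s ∈ N.SC x) :
    ∀ p : Idx n, N.Critical x p ↔ N.sCritical s x p :=
  fun _ => ⟨N.sCritical_of_critical hreg hs, N.critical_of_sCritical hreg hs⟩

end DRLP
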